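/- Let Ω ⊂ ℝⁿ be a bounded open domain with C¹ boundary and let u ∈ C²(Ω) ∩ C¹(Ω̄) be a solution of the Monge–Ampère equation det(∇²u) = f(x, u, ∇u) in Ω, where f is continuous and nonnegative on the relevant arguments, and assume inf_{∂Ω} ∂u/∂ν > 0. Then inf_{∂Ω} ∂u/∂ν ≤ ( (1/|B₁|) ∫_{Γ_u} |f(x, u(x), ∇u(x))| dx )^{1/n}. -/

import Mathlib

/-!
Aleksandrov–Bakelman–Pucci argument. Let `m = inf_{∂Ω} ∂u/∂ν` and `|p| < m`. The function
`u - ⟪p, ·⟫` attains its minimum over `Ω̄`, and not on `∂Ω`, where its outward normal derivative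
is at least `m - |p| > 0`; at an interior minimum `x` we get `∇u(x) = p` and `x ∈ Γ_u`. Hence
`B_m ⊆ ∇u(Γ_u)`, and the area formula for `∇u`, whose Jacobian is `det ∇²u = f(x, u, ∇u)`, gives
`|B₁| mⁿ ≤ |∇u(Γ_u)| ≤ ∫_{Γ_u} |f(x, u, ∇u)|`.
-/

open MeasureTheory Metric
open scoped RealInnerProductSpace

noncomputable section

/-- `ν` is an outward unit normal vector field on the boundary of `Ω`
(in the first-order sense appropriate for a `C¹` boundary). -/
def IsOutwardUnitNormal {n : ℕ} (Ω : Set (EuclideanSpace ℝ (Fin n)))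
    (ν : EuclideanSpace ℝ (Fin n) → EuclideanSpace ℝ (Fin n)) : Prop :=
  ContinuousOn ν (frontier Ω) ∧
  ∀ x ∈ frontier Ω, ‖ν x‖ = 1 ∧
    ∀ ε > 0, ∃ δ > 0, ∀ y ∈ closure Ω, dist y x < δ →
      ⟪ν x, y - x⟫ ≤ ε * ‖y - x‖

/-- The lower contact set `Γ_u` of `u` in `Ω`, where `G` is the gradient field of `u`. -/
def lowerContactSet {n : ℕ} (Ω : Set (EuclideanSpace ℝ (Fin n)))
    (u : EuclideanSpace ℝ (Fin n) → ℝ)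
    (G : EuclideanSpace ℝ (Fin n) → EuclideanSpace ℝ (Fin n)) :
    Set (EuclideanSpace ℝ (Fin n)) :=
  {x ∈ Ω | ∀ y ∈ closure Ω, u x + ⟪G x, y - x⟫ ≤ u y}

/-- The Hessian matrix `∇²u(x)` of `u : ℝⁿ → ℝ` at `x`. -/
def hessianMatrix {n : ℕ} (u : EuclideanSpace ℝ (Fin n) → ℝ)
    (x : EuclideanSpace ℝ (Fin n)) : Matrix (Fin n) (Fin n) ℝ :=
  Matrix.of fun i j =>
    iteratedFDeriv ℝ 2 u x ![EuclideanSpace.single i 1, EuclideanSpace.single j 1]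

open Filter Topology

theorem exists_pos_add_smul_mem_frontier {E : Type*} [NormedAddCommGroup E] [NormedSpace ℝ E]
    {Ω : Set E} (hΩo : IsOpen Ω) (hΩb : Bornology.IsBounded Ω)
    {z : E} (hz : z ∈ Ω) {v : E} (hv : v ≠ 0) :
    ∃ T > (0 : ℝ), (∀ t ∈ Set.Ico 0 T, z + t • v ∈ Ω) ∧ z + T • v ∈ frontier Ω := by
  have hray : Continuous fun t : ℝ => z + t • v := by fun_prop
  set S := Set.Ici (0 : ℝ) ∩ (fun t : ℝ => z + t • v) ⁻¹' Ωᶜ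
  have hS_closed : IsClosed S := isClosed_Ici.inter (hΩo.isClosed_compl.preimage hray)
  have hS_bdd : BddBelow S := ⟨0, fun t ht => ht.1⟩
  have hS_ne : S.Nonempty := by
    obtain ⟨C, hC⟩ := hΩb.exists_norm_le
    have hv' : 0 < ‖v‖ := norm_pos_iff.mpr hv
    have hC' : 0 ≤ C + ‖z‖ + 1 := by linarith [hC z hz, norm_nonneg z]
    refine ⟨(C + ‖z‖ + 1) / ‖v‖, div_nonneg hC' hv'.le, fun hmem => ?_⟩
    have hnorm : ‖((C + ‖z‖ + 1) / ‖v‖) • v‖ = C + ‖z‖ + 1 := by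
      rw [norm_smul, Real.norm_of_nonneg (div_nonneg hC' hv'.le), div_mul_cancel₀ _ hv'.ne']
    have := norm_sub_le (z + ((C + ‖z‖ + 1) / ‖v‖) • v) z
    rw [add_sub_cancel_left, hnorm] at this
    linarith [hC _ hmem]
  set T := sInf S
  obtain ⟨hT_nonneg, hT_out⟩ : T ∈ S := hS_closed.csInf_mem hS_ne hS_bdd
  have hbefore : ∀ t ∈ Set.Ico 0 T, z + t • v ∈ Ω := fun t ht => by
    by_contra hout
    exact (csInf_le hS_bdd ⟨ht.1, hout⟩).not_gt ht.2
  have hT_pos : 0 < T := hT_nonneg.lt_of_ne fun h => hT_out (by simpa [← h] using hz)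
  refine ⟨T, hT_pos, hbefore, ?_⟩
  rw [hΩo.frontier_eq]
  have hleft : Tendsto (fun t : ℝ => z + t • v) (𝓝[<] T) (𝓝 (z + T • v)) :=
    (hray.tendsto T).mono_left nhdsWithin_le_nhds
  exact ⟨mem_closure_of_tendsto hleft (mem_of_superset (Ico_mem_nhdsLT hT_pos) hbefore), hT_out⟩

theorem exists_mem_dist_lt_and_lt_add {X : Type*} [PseudoMetricSpace X] {s : Set X} {w : X → ℝ}
    {x₀ : X} (hx₀ : x₀ ∈ closure s) (hw : ContinuousWithinAt w (closure s) x₀) {δ ε : ℝ}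
    (hδ : 0 < δ) (hε : 0 < ε) : ∃ z ∈ s, dist z x₀ < δ ∧ w z < w x₀ + ε := by
  have := mem_closure_iff_nhdsWithin_neBot.mp hx₀
  have hws : Tendsto w (𝓝[s] x₀) (𝓝 (w x₀)) := hw.mono subset_closure
  exact (eventually_mem_nhdsWithin.and
    ((eventually_nhdsWithin_of_eventually_nhds (ball_mem_nhds x₀ hδ)).and
      (hws.eventually (gt_mem_nhds (lt_add_of_pos_right _ hε))))).exists

theorem real_inner_pos_of_norm_sub_lt_one {F : Type*} [NormedAddCommGroup F]
    [InnerProductSpace ℝ F] {a b : F} (ha : ‖a‖ = 1) (hb : ‖b‖ = 1) (hab : ‖a - b‖ < 1) :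
    0 < ⟪a, b⟫ := by
  have hsq := norm_sub_sq_real a b
  rw [ha, hb] at hsq
  nlinarith [norm_nonneg (a - b)]

section InnerProduct

variable {E : Type*} [NormedAddCommGroup E] [InnerProductSpace ℝ E] [CompleteSpace E] {Ω : Set E}

theorem IsLocalMin.hasGradientAt_eq_zero {f : E → ℝ} {f' x : E} (h : IsLocalMin f x)
    (hf : HasGradientAt f f' x) : f' = 0 :=
  (InnerProductSpace.toDual ℝ E).map_eq_zero_iff.mp (h.hasFDerivAt_eq_zero hf.hasFDerivAt)

theorem HasGradientAt.sub_inner_const {f : E → ℝ} {f' x : E} (hf : HasGradientAt f f' x)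
    (p : E) : HasGradientAt (fun y => f y - ⟪p, y⟫) (f' - p) x := by
  have hp : HasFDerivAt (fun y => ⟪p, y⟫) (InnerProductSpace.toDual ℝ E p) x :=
    (innerSL ℝ p).hasFDerivAt
  rw [hasGradientAt_iff_hasFDerivAt, map_sub]
  exact hf.hasFDerivAt.sub hp

theorem HasGradientAt.hasDerivAt_comp_add_smul {f : E → ℝ} {z v : E} {t : ℝ} {f' : E}
    (hf : HasGradientAt f f' (z + t • v)) :
    HasDerivAt (fun s : ℝ => f (z + s • v)) ⟪f', v⟫ t := by
  have hline : HasDerivAt (fun s : ℝ => z + s • v) ((1 : ℝ) • v) t :=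
    ((hasDerivAt_id t).smul_const v).const_add z
  have h := hf.hasFDerivAt.comp_hasDerivAt t hline
  rw [one_smul, InnerProductSpace.toDual_apply_apply] at h
  exact h

theorem exists_lt_add_smul_mem_frontier_of_descent (hΩo : IsOpen Ω)
    (hΩb : Bornology.IsBounded Ω) {w : E → ℝ} {g : E → E} (hwc : ContinuousOn w (closure Ω))
    (hg : ∀ y ∈ Ω, HasGradientAt w (g y) y) {z v : E} (hz : z ∈ Ω) (hv : v ≠ 0) {k r : ℝ}
    (hk : 0 < k) (hdesc : ∀ t ∈ Set.Ioo 0 r, z + t • v ∈ Ω → ⟪g (z + t • v), v⟫ ≤ -k)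
    (hlow : ∀ y ∈ closure Ω, w z - k * r < w y) :
    ∃ T ∈ Set.Ioo 0 r, (∀ t ∈ Set.Ico 0 T, z + t • v ∈ Ω) ∧ z + T • v ∈ frontier Ω := by
  obtain ⟨T, hT, hbefore, hexit⟩ := exists_pos_add_smul_mem_frontier hΩo hΩb hz hv
  have hr : 0 < r := pos_of_mul_pos_right (by linarith [hlow z (subset_closure hz)]) hk.le
  set τ := min T r
  have hτ : 0 < τ := lt_min hT hr
  have hcl : Set.MapsTo (fun t : ℝ => z + t • v) (Set.Icc 0 τ) (closure Ω) := by
    rintro t ⟨ht₀, htτ⟩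
    rcases (htτ.trans (min_le_left T r)).lt_or_eq with htT | rfl
    · exact subset_closure (hbefore t ⟨ht₀, htT⟩)
    · exact frontier_subset_closure hexit
  have hderiv : ∀ t ∈ Set.Ioo 0 τ,
      HasDerivAt (fun s : ℝ => w (z + s • v)) ⟪g (z + t • v), v⟫ t := fun t ht =>
    (hg _ (hbefore t ⟨ht.1.le, ht.2.trans_le (min_le_left T r)⟩)).hasDerivAt_comp_add_smul
  have hdrop : w (z + τ • v) - w (z + (0 : ℝ) • v) ≤ -k * (τ - 0) := by
    refine (convex_Icc 0 τ).image_sub_le_mul_sub_of_deriv_le (f := fun s : ℝ => w (z + s • v))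
      (hwc.comp (by fun_prop) hcl) ?_ ?_ 0 (Set.left_mem_Icc.mpr hτ.le) τ
      (Set.right_mem_Icc.mpr hτ.le) hτ.le
    · rw [interior_Icc]
      exact fun t ht => (hderiv t ht).differentiableAt.differentiableWithinAt
    · rw [interior_Icc]
      intro t ht
      rw [(hderiv t ht).deriv]
      exact hdesc t ⟨ht.1, ht.2.trans_le (min_le_right T r)⟩
        (hbefore t ⟨ht.1.le, ht.2.trans_le (min_le_left T r)⟩)
  rw [zero_smul, add_zero, sub_zero] at hdrop
  have hτr : τ < r := by
    have := hlow _ (hcl (Set.right_mem_Icc.mpr hτ.le))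
    nlinarith
  have hTr : T < r := by simpa [τ, hr.not_gt] using hτr
  exact ⟨T, ⟨hT, hTr⟩, hbefore, hexit⟩

def hessianCLM (u : E → ℝ) (x : E) : E →L[ℝ] E :=
  (InnerProductSpace.toDual ℝ E).symm.toContinuousLinearEquiv.toContinuousLinearMap ∘L
    fderiv ℝ (fderiv ℝ u) x

theorem hasFDerivAt_hessianCLM {u : E → ℝ} {G : E → E} (hΩo : IsOpen Ω)
    (hu2 : ContDiffOn ℝ 2 u Ω) (hG : ∀ x ∈ Ω, HasGradientAt u (G x) x) {x : E} (hx : x ∈ Ω) :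
    HasFDerivAt G (hessianCLM u x) x := by
  have hDu : DifferentiableAt ℝ (fderiv ℝ u) x :=
    ((hu2.fderiv_of_isOpen hΩo (by norm_num : (1 : WithTop ℕ∞) + 1 ≤ 2)).differentiableOn
      one_ne_zero).differentiableAt (hΩo.mem_nhds hx)
  refine ((InnerProductSpace.toDual ℝ E).symm.toContinuousLinearEquiv.toContinuousLinearMap
    |>.hasFDerivAt.comp x hDu.hasFDerivAt).congr_of_eventuallyEq ?_
  filter_upwards [hΩo.mem_nhds hx] with y hy
  simp [(hG y hy).hasFDerivAt.fderiv]

end InnerProduct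

namespace IsOutwardUnitNormal

variable {n : ℕ} {Ω : Set (EuclideanSpace ℝ (Fin n))}
  {ν : EuclideanSpace ℝ (Fin n) → EuclideanSpace ℝ (Fin n)}

theorem inner_nonpos (hν : IsOutwardUnitNormal Ω ν) {y v : EuclideanSpace ℝ (Fin n)}
    (hy : y ∈ frontier Ω) (hv : ∀ᶠ s in 𝓝[>] (0 : ℝ), y + s • v ∈ closure Ω) :
    ⟪ν y, v⟫ ≤ 0 := by
  have hbound : ∀ ε > 0, ⟪ν y, v⟫ ≤ ε * ‖v‖ := by
    intro ε hε
    obtain ⟨δ, hδ, hcone⟩ := (hν.2 y hy).2 ε hε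
    have hnear : ∀ᶠ s in 𝓝[>] (0 : ℝ), dist (y + s • v) y < δ := by
      have : Tendsto (fun s : ℝ => y + s • v) (𝓝 0) (𝓝 y) := by
        simpa using (Continuous.tendsto (by fun_prop : Continuous fun s : ℝ => y + s • v) 0)
      exact nhdsWithin_le_nhds (this.eventually (ball_mem_nhds y hδ))
    obtain ⟨s, hs, hsΩ, hsδ⟩ := (eventually_mem_nhdsWithin.and (hv.and hnear)).exists
    have h := hcone _ hsΩ hsδ
    rw [add_sub_cancel_left, real_inner_smul_right, norm_smul,
      Real.norm_of_nonneg (le_of_lt hs)] at h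
    rw [mul_left_comm] at h
    exact le_of_mul_le_mul_left h hs
  have hlim : Tendsto (fun ε : ℝ => ε * ‖v‖) (𝓝[>] 0) (𝓝 0) := by
    simpa using ((continuous_mul_const ‖v‖).tendsto (0 : ℝ)).mono_left
      (nhdsWithin_le_nhds (s := Set.Ioi (0 : ℝ)))
  exact ge_of_tendsto hlim (eventually_nhdsWithin_of_forall hbound)

/-- The hypothesis on `ν` only confines `Ω̄` near each boundary point, so the boundary minimum is
ruled out by walking from an interior point `z` near `x₀` in the direction `-ν x₀`. Since `w`
decreases along this ray at a definite rate, it must leave `Ω` close to `x₀`, at a boundary point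
`y` which `Ω` approaches from the direction `ν x₀`; then `⟪ν y, ν x₀⟫ ≤ 0`, contradicting the
continuity of `ν` at `x₀`. -/
theorem not_isMinOn_of_inner_pos (hν : IsOutwardUnitNormal Ω ν) (hΩo : IsOpen Ω)
    (hΩb : Bornology.IsBounded Ω) {w : EuclideanSpace ℝ (Fin n) → ℝ}
    {g : EuclideanSpace ℝ (Fin n) → EuclideanSpace ℝ (Fin n)} (hwc : ContinuousOn w (closure Ω))
    (hg : ∀ y ∈ Ω, HasGradientAt w (g y) y) (hgc : ContinuousOn g (closure Ω))
    {x₀ : EuclideanSpace ℝ (Fin n)} (hx₀ : x₀ ∈ frontier Ω) (hpos : 0 < ⟪g x₀, ν x₀⟫) :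
    ¬ IsMinOn w (closure Ω) x₀ := by
  intro hmin
  set ν₀ := ν x₀
  set a := ⟪g x₀, ν₀⟫
  have hx₀cl : x₀ ∈ closure Ω := frontier_subset_closure hx₀
  have hν₀ : ‖ν₀‖ = 1 := (hν.2 x₀ hx₀).1
  obtain ⟨ρ, hρ, hρg, hρν⟩ : ∃ ρ > 0, (∀ y ∈ closure Ω, dist y x₀ < ρ → a / 2 < ⟪g y, ν₀⟫) ∧
      ∀ y ∈ frontier Ω, dist y x₀ < ρ → ‖ν y - ν₀‖ < 1 := by
    obtain ⟨ρ₁, hρ₁, h₁⟩ := Metric.continuousWithinAt_iff.mp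
      ((hgc.inner (𝕜 := ℝ) (continuousOn_const (c := ν₀))) x₀ hx₀cl) (a / 2) (half_pos hpos)
    obtain ⟨ρ₂, hρ₂, h₂⟩ := Metric.continuousWithinAt_iff.mp (hν.1 x₀ hx₀) 1 one_pos
    refine ⟨min ρ₁ ρ₂, lt_min hρ₁ hρ₂, fun y hy hyd => ?_, fun y hy hyd => ?_⟩
    · have := h₁ hy (hyd.trans_le (min_le_left _ _))
      rw [Real.dist_eq, abs_sub_lt_iff] at this
      linarith
    · rw [← dist_eq_norm]
      exact h₂ hy (hyd.trans_le (min_le_right _ _))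
  obtain ⟨z, hzΩ, hzd, hzw⟩ := exists_mem_dist_lt_and_lt_add hx₀cl (hwc x₀ hx₀cl)
    (half_pos hρ) (by positivity : 0 < a / 2 * (ρ / 2))
  have hray_dist : ∀ t, 0 ≤ t → dist (z + t • -ν₀) x₀ ≤ t + dist z x₀ := fun t ht => by
    calc dist (z + t • -ν₀) x₀ ≤ dist (z + t • -ν₀) z + dist z x₀ := dist_triangle _ _ _
      _ = t + dist z x₀ := by rw [dist_self_add_left, norm_smul, norm_neg, hν₀,
          Real.norm_of_nonneg ht, mul_one]
  obtain ⟨T, ⟨hT, hTρ⟩, hbefore, hexit⟩ := exists_lt_add_smul_mem_frontier_of_descent hΩo hΩb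
    hwc hg hzΩ (neg_ne_zero.mpr (norm_ne_zero_iff.mp (hν₀.trans_ne one_ne_zero)))
    (k := a / 2) (r := ρ / 2) (half_pos hpos) (fun t ht hmem => by
      have := hρg _ (subset_closure hmem) (by linarith [hray_dist t ht.1.le, ht.2])
      rw [inner_neg_right]
      linarith)
    (fun y hy => by linarith [isMinOn_iff.mp hmin y hy])
  set y := z + T • -ν₀
  have hinner : ⟪ν y, ν₀⟫ ≤ 0 := by
    refine hν.inner_nonpos hexit ?_
    filter_upwards [Ioo_mem_nhdsGT hT] with s hs
    have hys : y + s • ν₀ = z + (T - s) • -ν₀ := by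
      simp only [y, smul_neg, sub_smul]
      abel
    exact hys ▸ subset_closure (hbefore _ ⟨by linarith [hs.2], by linarith [hs.1]⟩)
  exact hinner.not_gt (real_inner_pos_of_norm_sub_lt_one (hν.2 y hexit).1 hν₀
    (hρν y hexit (by linarith [hray_dist T hT.le])))

end IsOutwardUnitNormal

section ContactSet

variable {n : ℕ} {Ω : Set (EuclideanSpace ℝ (Fin n))} {u : EuclideanSpace ℝ (Fin n) → ℝ}
  {G : EuclideanSpace ℝ (Fin n) → EuclideanSpace ℝ (Fin n)}

theorem mem_lowerContactSet_of_isMinOn (hΩo : IsOpen Ω) {p x₀ : EuclideanSpace ℝ (Fin n)}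
    (hx₀ : x₀ ∈ Ω) (hG : HasGradientAt u (G x₀) x₀)
    (hmin : IsMinOn (fun y => u y - ⟪p, y⟫) (closure Ω) x₀) :
    x₀ ∈ lowerContactSet Ω u G ∧ G x₀ = p := by
  have hloc : IsLocalMin (fun y => u y - ⟪p, y⟫) x₀ :=
    hmin.isLocalMin (Filter.mem_of_superset (hΩo.mem_nhds hx₀) subset_closure)
  have hGp : G x₀ = p := sub_eq_zero.mp (hloc.hasGradientAt_eq_zero (hG.sub_inner_const p))
  refine ⟨⟨hx₀, fun y hy => ?_⟩, hGp⟩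
  have := isMinOn_iff.mp hmin y hy
  rw [hGp, inner_sub_right]
  linarith

theorem ball_subset_image_lowerContactSet (hΩo : IsOpen Ω) (hΩb : Bornology.IsBounded Ω)
    (hΩne : Ω.Nonempty) {ν : EuclideanSpace ℝ (Fin n) → EuclideanSpace ℝ (Fin n)}
    (hν : IsOutwardUnitNormal Ω ν) (hu : ContinuousOn u (closure Ω))
    (hG : ∀ x ∈ Ω, HasGradientAt u (G x) x) (hGc : ContinuousOn G (closure Ω)) {m : ℝ}
    (hm : ∀ x ∈ frontier Ω, m ≤ ⟪G x, ν x⟫) :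
    ball 0 m ⊆ G '' lowerContactSet Ω u G := by
  intro p hp
  rw [mem_ball_zero_iff] at hp
  have hwc : ContinuousOn (fun y => u y - ⟪p, y⟫) (closure Ω) := hu.sub (by fun_prop)
  obtain ⟨x₀, hx₀, hmin⟩ :=
    hΩb.isCompact_closure.exists_isMinOn (hΩne.mono subset_closure) hwc
  by_cases hx₀Ω : x₀ ∈ Ω
  · obtain ⟨hcontact, hGp⟩ := mem_lowerContactSet_of_isMinOn hΩo hx₀Ω (hG x₀ hx₀Ω) hmin
    exact ⟨x₀, hcontact, hGp⟩
  · have hfr : x₀ ∈ frontier Ω := by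
      rw [hΩo.frontier_eq]
      exact ⟨hx₀, hx₀Ω⟩
    refine absurd hmin (hν.not_isMinOn_of_inner_pos hΩo hΩb hwc
      (fun y hy => (hG y hy).sub_inner_const p) (hGc.sub continuousOn_const) hfr ?_)
    have hpν : ⟪p, ν x₀⟫ ≤ ‖p‖ := by
      simpa [(hν.2 x₀ hfr).1] using real_inner_le_norm p (ν x₀)
    rw [inner_sub_left]
    linarith [hm x₀ hfr]

theorem measurableSet_lowerContactSet (hΩo : IsOpen Ω) (hu : ContinuousOn u (closure Ω))
    (hGc : ContinuousOn G (closure Ω)) : MeasurableSet (lowerContactSet Ω u G) := by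
  have hclosed : ∀ y, IsClosed (closure Ω ∩ (fun x => u x + ⟪G x, y - x⟫) ⁻¹' Set.Iic (u y)) :=
    fun y => (hu.add (hGc.inner (by fun_prop))).preimage_isClosed_of_isClosed isClosed_closure
      isClosed_Iic
  convert hΩo.measurableSet.inter
    (isClosed_closure.inter (isClosed_biInter fun y (_ : y ∈ closure Ω) => hclosed y)).measurableSet
    using 1
  ext x
  simp only [lowerContactSet, Set.mem_ofPred_eq, Set.mem_inter_iff, Set.mem_iInter,
    Set.mem_preimage, Set.mem_Iic]
  exact ⟨fun hx => ⟨hx.1, subset_closure hx.1, fun y hy => ⟨subset_closure hx.1, hx.2 y hy⟩⟩,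
    fun hx => ⟨hx.1, fun y hy => (hx.2.2 y hy).2⟩⟩

end ContactSet

theorem det_hessianCLM {n : ℕ} (u : EuclideanSpace ℝ (Fin n) → ℝ) (x : EuclideanSpace ℝ (Fin n)) :
    (hessianCLM u x).det = (hessianMatrix u x).det := by
  set b := (EuclideanSpace.basisFun (Fin n) ℝ).toBasis
  have hmat : LinearMap.toMatrix b b (hessianCLM u x : _ →ₗ[ℝ] _) =
      (hessianMatrix u x).transpose := by
    ext i j
    rw [LinearMap.toMatrix_apply]
    simp only [b, hessianCLM, hessianMatrix, iteratedFDeriv_two_apply, ContinuousLinearMap.coe_coe,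
      ContinuousLinearMap.toLinearMap_comp, LinearMap.coe_comp, Function.comp_apply,
      ContinuousLinearEquiv.toLinearMap_toContinuousLinearMap, LinearEquiv.coe_coe,
      ContinuousLinearEquiv.coe_symm_toLinearEquiv, ContinuousLinearEquiv.toLinearEquiv_symm,
      LinearIsometryEquiv.toContinuousLinearEquiv_symm,
      LinearIsometryEquiv.coe_symm_toContinuousLinearEquiv, OrthonormalBasis.coe_toBasis,
      OrthonormalBasis.coe_toBasis_repr_apply, EuclideanSpace.basisFun_apply,
      EuclideanSpace.basisFun_repr, Matrix.cons_val_zero, Matrix.cons_val_one,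
      Matrix.cons_val_fin_one, Matrix.transpose_apply, Matrix.of_apply]
    rw [← InnerProductSpace.toDual_symm_apply, EuclideanSpace.inner_single_right]
    simp
  rw [ContinuousLinearMap.det, ← LinearMap.det_toMatrix b, hmat, Matrix.det_transpose]

theorem volume_image_le_lintegral_abs_det_hessianMatrix {n : ℕ}
    {Ω : Set (EuclideanSpace ℝ (Fin n))} {u : EuclideanSpace ℝ (Fin n) → ℝ}
    {G : EuclideanSpace ℝ (Fin n) → EuclideanSpace ℝ (Fin n)} (hΩo : IsOpen Ω)
    (hu2 : ContDiffOn ℝ 2 u Ω) (hG : ∀ x ∈ Ω, HasGradientAt u (G x) x) {s : Set _}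
    (hs : MeasurableSet s) (hsΩ : s ⊆ Ω) :
    volume (G '' s) ≤ ∫⁻ x in s, ENNReal.ofReal |(hessianMatrix u x).det| := by
  simpa only [det_hessianCLM] using addHaar_image_le_lintegral_abs_det_fderiv volume hs
    fun x hx => (hasFDerivAt_hessianCLM hΩo hu2 hG (hsΩ hx)).hasFDerivWithinAt

theorem le_rpow_inv_of_pow_mul_le {m V I : ℝ} {n : ℕ} (hn : n ≠ 0) (hm : 0 ≤ m) (hV : 0 < V)
    (h : m ^ n * V ≤ I) : m ≤ (1 / V * I) ^ (n : ℝ)⁻¹ := by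
  calc m = (m ^ n) ^ (n : ℝ)⁻¹ := (Real.pow_rpow_inv_natCast hm hn).symm
    _ ≤ (1 / V * I) ^ (n : ℝ)⁻¹ := by
      refine Real.rpow_le_rpow (by positivity) ?_ (by positivity)
      rwa [one_div, inv_mul_eq_div, le_div_iff₀ hV]

theorem stmt15_general {n : ℕ} (hn : 0 < n)
    (Ω : Set (EuclideanSpace ℝ (Fin n))) (hΩo : IsOpen Ω)
    (hΩb : Bornology.IsBounded Ω) (hΩne : Ω.Nonempty)
    (ν : EuclideanSpace ℝ (Fin n) → EuclideanSpace ℝ (Fin n))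
    (hν : IsOutwardUnitNormal Ω ν)
    -- `f = f(x, s, q)` continuous and nonnegative
    (f : EuclideanSpace ℝ (Fin n) → ℝ → EuclideanSpace ℝ (Fin n) → ℝ)
    (hf_cont : Continuous fun q : EuclideanSpace ℝ (Fin n) × ℝ × EuclideanSpace ℝ (Fin n) =>
      f q.1 q.2.1 q.2.2)
    (u : EuclideanSpace ℝ (Fin n) → ℝ)
    (G : EuclideanSpace ℝ (Fin n) → EuclideanSpace ℝ (Fin n))
    -- `u ∈ C²(Ω) ∩ C¹(Ω̄)`
    (hu2 : ContDiffOn ℝ 2 u Ω)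
    (hu : ContinuousOn u (closure Ω))
    (hG : ∀ x ∈ Ω, HasGradientAt u (G x) x)
    (hGc : ContinuousOn G (closure Ω))
    -- `det(∇²u) = f(x, u, ∇u)` in `Ω`
    (heq : ∀ x ∈ Ω, (hessianMatrix u x).det = f x (u x) (G x))
    -- `inf_{∂Ω} ∂u/∂ν > 0`
    (hinf : 0 < sInf ((fun x => ⟪G x, ν x⟫) '' frontier Ω)) :
    sInf ((fun x => ⟪G x, ν x⟫) '' frontier Ω) ≤
      ((1 / (volume (Metric.ball (0 : EuclideanSpace ℝ (Fin n)) 1)).toReal) *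
        ∫ x in lowerContactSet Ω u G, |f x (u x) (G x)|) ^ ((n : ℝ)⁻¹) := by
  set m := sInf ((fun x => ⟪G x, ν x⟫) '' frontier Ω)
  set Γ := lowerContactSet Ω u G
  have hΓ : MeasurableSet Γ := measurableSet_lowerContactSet hΩo hu hGc
  have hm : ∀ x ∈ frontier Ω, m ≤ ⟪G x, ν x⟫ := fun x hx =>
    csInf_le ((hΩb.isCompact_closure.of_isClosed_subset isClosed_frontier
      frontier_subset_closure).bddBelow_image
      ((hGc.mono frontier_subset_closure).inner hν.1)) ⟨x, hx, rfl⟩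
  have hInt : IntegrableOn (fun x => |f x (u x) (G x)|) Γ :=
    ((hf_cont.comp_continuousOn (continuousOn_id.prodMk (hu.prodMk hGc))).abs
      |>.integrableOn_compact hΩb.isCompact_closure).mono_set fun x hx => subset_closure hx.1
  have hvol : ENNReal.ofReal (m ^ n) * volume (ball (0 : EuclideanSpace ℝ (Fin n)) 1) ≤
      ENNReal.ofReal (∫ x in Γ, |f x (u x) (G x)|) := calc
    _ = volume (ball (0 : EuclideanSpace ℝ (Fin n)) m) := by
      rw [Measure.addHaar_ball_of_pos _ _ hinf, finrank_euclideanSpace_fin]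
    _ ≤ volume (G '' Γ) :=
      measure_mono (ball_subset_image_lowerContactSet hΩo hΩb hΩne hν hu hG hGc hm)
    _ ≤ ∫⁻ x in Γ, ENNReal.ofReal |(hessianMatrix u x).det| :=
      volume_image_le_lintegral_abs_det_hessianMatrix hΩo hu2 hG hΓ fun x hx => hx.1
    _ = ∫⁻ x in Γ, ENNReal.ofReal |f x (u x) (G x)| :=
      setLIntegral_congr_fun hΓ fun x hx => by rw [heq x hx.1]
    _ = ENNReal.ofReal (∫ x in Γ, |f x (u x) (G x)|) :=
      (ofReal_integral_eq_lintegral_ofReal hInt (ae_of_all _ fun x => abs_nonneg _)).symm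
  have hB : 0 < (volume (ball (0 : EuclideanSpace ℝ (Fin n)) 1)).toReal :=
    ENNReal.toReal_pos (measure_ball_pos volume 0 one_pos).ne' measure_ball_lt_top.ne
  refine le_rpow_inv_of_pow_mul_le hn.ne' hinf.le hB ?_
  have := ENNReal.toReal_mono ENNReal.ofReal_ne_top hvol
  rwa [ENNReal.toReal_mul, ENNReal.toReal_ofReal (pow_nonneg hinf.le n),
    ENNReal.toReal_ofReal (integral_nonneg fun x => abs_nonneg _)] at this

theorem stmt15 {n : ℕ} (hn : 0 < n)
    (Ω : Set (EuclideanSpace ℝ (Fin n))) (hΩo : IsOpen Ω)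
    (hΩb : Bornology.IsBounded Ω) (hΩne : Ω.Nonempty)
    (ν : EuclideanSpace ℝ (Fin n) → EuclideanSpace ℝ (Fin n))
    (hν : IsOutwardUnitNormal Ω ν)
    -- `f = f(x, s, q)` continuous and nonnegative
    (f : EuclideanSpace ℝ (Fin n) → ℝ → EuclideanSpace ℝ (Fin n) → ℝ)
    (hf_cont : Continuous fun q : EuclideanSpace ℝ (Fin n) × ℝ × EuclideanSpace ℝ (Fin n) =>
      f q.1 q.2.1 q.2.2)
    (hf_nonneg : ∀ x s q, 0 ≤ f x s q)
    (u : EuclideanSpace ℝ (Fin n) → ℝ)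
    (G : EuclideanSpace ℝ (Fin n) → EuclideanSpace ℝ (Fin n))
    -- `u ∈ C²(Ω) ∩ C¹(Ω̄)`
    (hu2 : ContDiffOn ℝ 2 u Ω)
    (hu : ContinuousOn u (closure Ω))
    (hG : ∀ x ∈ Ω, HasGradientAt u (G x) x)
    (hGc : ContinuousOn G (closure Ω))
    -- `det(∇²u) = f(x, u, ∇u)` in `Ω`
    (heq : ∀ x ∈ Ω, (hessianMatrix u x).det = f x (u x) (G x))
    -- `inf_{∂Ω} ∂u/∂ν > 0`
    (hinf : 0 < sInf ((fun x => ⟪G x, ν x⟫) '' frontier Ω)) :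
    sInf ((fun x => ⟪G x, ν x⟫) '' frontier Ω) ≤
      ((1 / (volume (Metric.ball (0 : EuclideanSpace ℝ (Fin n)) 1)).toReal) *
        ∫ x in lowerContactSet Ω u G, |f x (u x) (G x)|) ^ ((n : ℝ)⁻¹) :=
  stmt15_general hn Ω hΩo hΩb hΩne ν hν f hf_cont u G hu2 hu hG hGc heq hinf
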